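/- arXiv:1111.6067 — 5 statements merged into one kernel-verified Lean document; each statement's English description precedes it below -/
import Mathlib

section
/- Fix real constants A, b, c > 0. Define M : [0,1] → ℝ by M(u) = A(b+cu)^{−2} and Δ(u) = ∫_0^u ( −∫_v^1 M(s) ds ) dv for u ∈ [0,1]. Then −∫_0^1 M(v)·Δ(v) dv = ( A²/( c³(b+c) ) )·( c(2b+c)/( b(b+c) ) + 2·log( b/(b+c) ) ). -/
/-!
Since `Δ'' = M` with `Δ(0) = 0` and `Δ'(1) = 0`, integration by parts gives
`-∫₀¹ M Δ = ∫₀¹ (Δ')²`. Here `Δ'(v) = -(A/c) ((b + c v)⁻¹ - (b + c)⁻¹)`, whose square has the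
elementary primitive `v/(b+c)² - (b + c v)⁻¹/c - 2 log(b + c v)/(c (b + c))`.
-/
open MeasureTheory Real Set intervalIntegral Topology
open scoped Interval

theorem integral_mul_primitive_neg_integral_eq_neg_integral_sq {m : ℝ → ℝ} {a b : ℝ}
    (hm : ContinuousOn m [[a, b]]) :
    ∫ x in a..b, m x * ∫ y in a..x, -∫ z in y..b, m z = -∫ x in a..b, (∫ y in x..b, m y) ^ 2 := by
  set g : ℝ → ℝ := fun x => -∫ y in x..b, m y
  have hg_cont : ContinuousOn g [[a, b]] :=
    (continuousOn_primitive_interval_left hm.integrableOn_uIcc).neg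
  have hg_deriv : ∀ x ∈ Ioo (min a b) (max a b), HasDerivAt g (m x) x := by
    intro x hx
    have hx_nhds : [[a, b]] ∈ 𝓝 x := Icc_mem_nhds hx.1 hx.2
    have h := (integral_hasDerivAt_left
      (hm.mono (uIcc_subset_uIcc_right (Ioo_subset_Icc_self hx))).intervalIntegrable
      ((hm.mono Ioo_subset_Icc_self).stronglyMeasurableAtFilter isOpen_Ioo x hx)
      (hm.continuousAt hx_nhds)).neg
    rwa [neg_neg] at h
  have hF_deriv : ∀ x ∈ Ioo (min a b) (max a b),
      HasDerivAt (fun x => ∫ y in a..x, g y) (g x) x := fun x hx =>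
    integral_hasDerivAt_right
      (hg_cont.mono (uIcc_subset_uIcc_left (Ioo_subset_Icc_self hx))).intervalIntegrable
      ((hg_cont.mono Ioo_subset_Icc_self).stronglyMeasurableAtFilter isOpen_Ioo x hx)
      (hg_deriv x hx).continuousAt
  have hibp := integral_mul_deriv_eq_deriv_mul_of_hasDerivAt
    (continuousOn_primitive_interval hg_cont.integrableOn_uIcc) hg_cont hF_deriv hg_deriv
    hg_cont.intervalIntegrable hm.intervalIntegrable
  simp only [mul_comm (m _), hibp]
  simp [g, sq]

section Affine

variable {b c : ℝ}

theorem continuousOn_inv_sq_affine {s : Set ℝ} (h : ∀ x ∈ s, b + c * x ≠ 0) :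
    ContinuousOn (fun x => ((b + c * x) ^ 2)⁻¹) s :=
  ContinuousOn.inv₀ (by fun_prop) fun x hx => pow_ne_zero 2 (h x hx)

theorem integral_inv_sq_affine (hc : c ≠ 0) {v w : ℝ} (h : ∀ x ∈ [[v, w]], b + c * x ≠ 0) :
    ∫ x in v..w, ((b + c * x) ^ 2)⁻¹ = ((b + c * v)⁻¹ - (b + c * w)⁻¹) / c := by
  have hderiv : ∀ x ∈ [[v, w]],
      HasDerivAt (fun x => -(b + c * x)⁻¹ / c) ((b + c * x) ^ 2)⁻¹ x := by
    intro x hx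
    refine ((((hasDerivAt_id' x).const_mul c).const_add b).inv (h x hx)).neg.div_const c
      |>.congr_deriv ?_
    field_simp
  rw [integral_eq_sub_of_hasDerivAt hderiv (continuousOn_inv_sq_affine h).intervalIntegrable]
  ring

theorem integral_sq_inv_affine_sub_inv (hc : c ≠ 0) (h : ∀ x ∈ [[(0 : ℝ), 1]], b + c * x ≠ 0) :
    ∫ x in (0 : ℝ)..1, ((b + c * x)⁻¹ - (b + c)⁻¹) ^ 2
      = (c * (2 * b + c) / (b * (b + c)) + 2 * log (b / (b + c))) / (c * (b + c)) := by
  have hb : b ≠ 0 := by simpa using h 0 (by simp)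
  have hbc : b + c ≠ 0 := by simpa using h 1 (by simp)
  have hderiv : ∀ x ∈ [[(0 : ℝ), 1]], HasDerivAt
      (fun x => x / (b + c) ^ 2 - (b + c * x)⁻¹ / c - 2 * log (b + c * x) / (c * (b + c)))
      (((b + c * x)⁻¹ - (b + c)⁻¹) ^ 2) x := by
    intro x hx
    have hx0 := h x hx
    have hlin : HasDerivAt (fun x => b + c * x) (c * 1) x :=
      ((hasDerivAt_id' x).const_mul c).const_add b
    refine (((hasDerivAt_id' x).div_const ((b + c) ^ 2)).sub ((hlin.inv hx0).div_const c)).sub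
      (((hlin.log hx0).const_mul 2).div_const (c * (b + c))) |>.congr_deriv ?_
    field_simp
    ring
  have hcont : ContinuousOn (fun x => ((b + c * x)⁻¹ - (b + c)⁻¹) ^ 2) [[(0 : ℝ), 1]] :=
    ((ContinuousOn.inv₀ (by fun_prop) h).sub continuousOn_const).pow 2
  rw [integral_eq_sub_of_hasDerivAt hderiv hcont.intervalIntegrable, log_div hb hbc]
  simp only [mul_zero, add_zero, mul_one]
  field_simp
  ring

end Affine

theorem neg_integral_M_Delta_eq_general (A b c : ℝ) (hb : 0 < b) (hc : 0 < c)
    (M : ℝ → ℝ) (hM : ∀ u, M u = A * ((b + c * u) ^ 2)⁻¹)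
    (Δ : ℝ → ℝ) (hΔ : ∀ u, Δ u = ∫ v in (0:ℝ)..u, -(∫ s in v..(1:ℝ), M s)) :
    -(∫ v in (0:ℝ)..1, M v * Δ v)
      = (A ^ 2 / (c ^ 3 * (b + c))) *
          (c * (2 * b + c) / (b * (b + c)) + 2 * Real.log (b / (b + c))) := by
  have hne : ∀ x ∈ [[(0 : ℝ), 1]], b + c * x ≠ 0 := fun x hx => by
    rw [uIcc_of_le zero_le_one] at hx
    exact (add_pos_of_pos_of_nonneg hb (mul_nonneg hc.le hx.1)).ne'
  have hM_eq : M = fun u => A * ((b + c * u) ^ 2)⁻¹ := funext hM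
  have hinner : ∀ v ∈ [[(0 : ℝ), 1]],
      (∫ s in v..1, M s) ^ 2 = (A / c) ^ 2 * ((b + c * v)⁻¹ - (b + c)⁻¹) ^ 2 := by
    intro v hv
    rw [hM_eq, intervalIntegral.integral_const_mul, integral_inv_sq_affine hc.ne'
      fun x hx => hne x (uIcc_subset_uIcc hv right_mem_uIcc hx), mul_one]
    ring
  simp only [hΔ]
  rw [integral_mul_primitive_neg_integral_eq_neg_integral_sq
      (hM_eq ▸ continuousOn_const.mul (continuousOn_inv_sq_affine hne)),
    neg_neg, integral_congr hinner, intervalIntegral.integral_const_mul,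
    integral_sq_inv_affine_sub_inv hc.ne' hne]
  field_simp

/-- Proposition B.3, formula for C₂ = −∫_0^1 M Δ, where Δ(u) = ∫_0^u (−∫_v^1 M)
and M(u) = A (b + c u)⁻². -/
theorem neg_integral_M_Delta_eq (A b c : ℝ) (hA : 0 < A) (hb : 0 < b) (hc : 0 < c)
    (M : ℝ → ℝ) (hM : ∀ u, M u = A * ((b + c * u) ^ 2)⁻¹)
    (Δ : ℝ → ℝ) (hΔ : ∀ u, Δ u = ∫ v in (0:ℝ)..u, -(∫ s in v..(1:ℝ), M s)) :
    -(∫ v in (0:ℝ)..1, M v * Δ v)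
      = (A ^ 2 / (c ^ 3 * (b + c))) *
          (c * (2 * b + c) / (b * (b + c)) + 2 * Real.log (b / (b + c))) :=
  neg_integral_M_Delta_eq_general A b c hb hc M hM Δ hΔ
end

section
/- Fix real constants b > 0 and c₁ > 0. For τ > 0 set c := c₁τ and A := 2c₁τ², define M_τ(u) = A(b+cu)^{−2} on [0,1], Δ_τ(u) = ∫_0^u ( −∫_v^1 M_τ(s) ds ) dv, Γ_τ(u) = ∫_0^u ( −2∫_v^1 M_τ(s)Δ_τ(s) ds ) dv, and A₂(τ) := Γ_τ(1)/2. Then lim_{τ → 0⁺} A₂(τ)/τ⁴ = 5c₁²/(6b⁴). -/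
open MeasureTheory Real Filter Topology

/-- The weight `M_τ(u) = A (b + c u)⁻²` with `c = c₁ τ`, `A = 2 c₁ τ²`. -/
noncomputable def Mwt (b c₁ τ u : ℝ) : ℝ := (2 * c₁ * τ ^ 2) * ((b + c₁ * τ * u) ^ 2)⁻¹

/-- `Δ_τ(u) = ∫_0^u (−∫_v^1 M_τ)`. -/
noncomputable def DeltaFn (b c₁ τ u : ℝ) : ℝ :=
  ∫ v in (0:ℝ)..u, -(∫ s in v..(1:ℝ), Mwt b c₁ τ s)

/-- `Γ_τ(u) = ∫_0^u (−2∫_v^1 M_τ Δ_τ)`. -/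
noncomputable def GammaFn (b c₁ τ u : ℝ) : ℝ :=
  ∫ v in (0:ℝ)..u, (-2 * ∫ s in v..(1:ℝ), Mwt b c₁ τ s * DeltaFn b c₁ τ s)

/-!
Writing `M_τ = τ² W_τ` with `W_τ(s) = 2c₁ (b + c₁τs)⁻²` gives `Δ_τ = τ² D_τ` and
`Γ_τ(1) = τ⁴ H(τ)`, where `D_τ` and `H(τ)` are the same iterated integrals built from
`W_τ`. These are parametric integrals of jointly continuous integrands, so `H` is
continuous and `A₂(τ)/τ⁴ = H(τ)/2 → H(0)/2`. At `τ = 0` the weight is the constant `k = 2c₁/b²`, so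
`D_0(s) = k(s²/2 - s)` and `H(0) = 5k²/12 = 5c₁²/(3b⁴)`, by polynomial antiderivatives.
-/

open Set

noncomputable def iteratedTailIntegral (f : ℝ → ℝ) (u : ℝ) : ℝ :=
  ∫ v in (0:ℝ)..u, -∫ s in v..1, f s

theorem continuous_iteratedTailIntegral {X : Type*} [TopologicalSpace X] {f : X → ℝ → ℝ}
    (hf : Continuous f.uncurry) :
    Continuous fun p : X × ℝ => iteratedTailIntegral (f p.1) p.2 := by
  have hinner : Continuous fun q : X × ℝ => -∫ s in q.2..1, f q.1 s := by
    simp_rw [intervalIntegral.integral_symm (1 : ℝ), neg_neg]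
    exact intervalIntegral.continuous_parametric_primitive_of_continuous hf
  exact intervalIntegral.continuous_parametric_intervalIntegral_of_continuous
    (f := fun (p : X × ℝ) v => -∫ s in v..1, f p.1 s)
    (hinner.comp (by fun_prop : Continuous fun q : (X × ℝ) × ℝ => (q.1.1, q.2)))
    continuous_snd

theorem iteratedTailIntegral_eq_of_hasDerivAt {f F G : ℝ → ℝ} (hf : Continuous f)
    (hF : ∀ x, HasDerivAt F (f x) x) (hG : ∀ x, HasDerivAt G (F x) x) (u : ℝ) :
    iteratedTailIntegral f u = G u - G 0 - u * F 1 := by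
  have hFc : Continuous F := continuous_iff_continuousAt.2 fun x => (hF x).continuousAt
  have hinner : ∀ v, -∫ s in v..1, f s = F v - F 1 := fun v => by
    rw [intervalIntegral.integral_eq_sub_of_hasDerivAt (fun x _ => hF x)
      (hf.intervalIntegrable _ _)]
    ring
  simp_rw [iteratedTailIntegral, hinner]
  rw [intervalIntegral.integral_sub (hFc.intervalIntegrable _ _) intervalIntegrable_const,
    intervalIntegral.integral_eq_sub_of_hasDerivAt (fun x _ => hG x)
      (hFc.intervalIntegrable _ _)]
  simp

theorem iteratedTailIntegral_const (k u : ℝ) :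
    iteratedTailIntegral (fun _ => k) u = k * (u ^ 2 / 2 - u) := by
  rw [iteratedTailIntegral_eq_of_hasDerivAt continuous_const (F := fun x => k * x)
    (G := fun x => k * (x ^ 2 / 2)) (fun x => by simpa using (hasDerivAt_id x).const_mul k)
    (fun x => by simpa using ((hasDerivAt_pow 2 x).div_const 2).const_mul k)]
  ring

theorem iteratedTailIntegral_one_two_mul_iteratedTailIntegral_const (k : ℝ) :
    iteratedTailIntegral (fun s => 2 * k * iteratedTailIntegral (fun _ => k) s) 1 =
      5 * k ^ 2 / 12 := by
  simp only [iteratedTailIntegral_const]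
  rw [iteratedTailIntegral_eq_of_hasDerivAt (by fun_prop)
    (F := fun x => k ^ 2 * (x ^ 3 / 3 - x ^ 2)) (G := fun x => k ^ 2 * (x ^ 4 / 12 - x ^ 3 / 3))]
  · ring
  · intro x
    exact ((((hasDerivAt_pow 3 x).div_const 3).sub (hasDerivAt_pow 2 x)).const_mul
      (k ^ 2)).congr_deriv (by push_cast; ring)
  · intro x
    exact ((((hasDerivAt_pow 4 x).div_const 12).sub ((hasDerivAt_pow 3 x).div_const 3)).const_mul
      (k ^ 2)).congr_deriv (by push_cast; ring)

theorem iteratedTailIntegral_eq_const_mul_of_eqOn {f g : ℝ → ℝ} {k u : ℝ} (hu : 0 ≤ u)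
    (h : EqOn f (fun s => k * g s) (Ici 0)) :
    iteratedTailIntegral f u = k * iteratedTailIntegral g u := by
  rw [iteratedTailIntegral, iteratedTailIntegral, ← intervalIntegral.integral_const_mul]
  refine intervalIntegral.integral_congr fun v hv => ?_
  have hv : 0 ≤ v := by rw [uIcc_of_le hu] at hv; exact hv.1
  rw [mul_neg, ← intervalIntegral.integral_const_mul]
  congr 1
  refine intervalIntegral.integral_congr fun s hs => h ?_
  exact le_trans (le_min hv zero_le_one) hs.1

/-- `Mwt b c₁ τ / τ²`, with the denominator truncated below at `b / 2`: this makes it jointly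
continuous in `(τ, s)` on all of `ℝ²`, and the truncation is inactive for `τ, s ≥ 0`. -/
noncomputable def scaledWeight (b c₁ τ s : ℝ) : ℝ :=
  2 * c₁ * ((max (b / 2) (b + c₁ * τ * s)) ^ 2)⁻¹

noncomputable def scaledGamma (b c₁ τ : ℝ) : ℝ :=
  iteratedTailIntegral
    (fun s => 2 * scaledWeight b c₁ τ s * iteratedTailIntegral (scaledWeight b c₁ τ) s) 1

section

variable {b c₁ τ : ℝ}

theorem Mwt_eq_sq_mul_scaledWeight (hb : 0 < b) (hc₁ : 0 ≤ c₁) (hτ : 0 ≤ τ) {s : ℝ}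
    (hs : 0 ≤ s) :
    Mwt b c₁ τ s = τ ^ 2 * scaledWeight b c₁ τ s := by
  rw [Mwt, scaledWeight, max_eq_right (by nlinarith [mul_nonneg (mul_nonneg hc₁ hτ) hs])]
  ring

theorem DeltaFn_eq_sq_mul (hb : 0 < b) (hc₁ : 0 ≤ c₁) (hτ : 0 ≤ τ) {u : ℝ}
    (hu : 0 ≤ u) :
    DeltaFn b c₁ τ u = τ ^ 2 * iteratedTailIntegral (scaledWeight b c₁ τ) u :=
  iteratedTailIntegral_eq_const_mul_of_eqOn hu fun _ hs =>
    Mwt_eq_sq_mul_scaledWeight hb hc₁ hτ hs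

theorem GammaFn_eq_iteratedTailIntegral (u : ℝ) :
    GammaFn b c₁ τ u =
      iteratedTailIntegral (fun s => 2 * Mwt b c₁ τ s * DeltaFn b c₁ τ s) u := by
  refine intervalIntegral.integral_congr fun v _ => ?_
  simp only [neg_mul, mul_assoc, intervalIntegral.integral_const_mul]

theorem GammaFn_one_eq_pow_four_mul (hb : 0 < b) (hc₁ : 0 ≤ c₁) (hτ : 0 ≤ τ) :
    GammaFn b c₁ τ 1 = τ ^ 4 * scaledGamma b c₁ τ := by
  rw [GammaFn_eq_iteratedTailIntegral, scaledGamma]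
  refine iteratedTailIntegral_eq_const_mul_of_eqOn zero_le_one fun s (hs : 0 ≤ s) => ?_
  simp only [Mwt_eq_sq_mul_scaledWeight hb hc₁ hτ hs, DeltaFn_eq_sq_mul hb hc₁ hτ hs]
  ring

theorem continuous_scaledWeight (hb : 0 < b) :
    Continuous (Function.uncurry (scaledWeight b c₁)) :=
  continuous_const.mul <| Continuous.inv₀ (by fun_prop) fun p =>
    pow_ne_zero 2 (lt_of_lt_of_le (half_pos hb) (le_max_left _ _)).ne'

theorem continuous_scaledGamma (hb : 0 < b) : Continuous (scaledGamma b c₁) := by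
  have hD := continuous_iteratedTailIntegral (continuous_scaledWeight (c₁ := c₁) hb)
  have hintegrand : Continuous (Function.uncurry fun τ s =>
      2 * scaledWeight b c₁ τ s * iteratedTailIntegral (scaledWeight b c₁ τ) s) :=
    (continuous_const.mul (continuous_scaledWeight hb)).mul hD
  have hGamma :=
    (continuous_iteratedTailIntegral hintegrand).comp (Continuous.prodMk_left (X := ℝ) 1)
  exact hGamma

theorem scaledGamma_zero (hb : 0 < b) : scaledGamma b c₁ 0 = 5 * c₁ ^ 2 / (3 * b ^ 4) := by
  have hw : scaledWeight b c₁ 0 = fun _ => 2 * c₁ * (b ^ 2)⁻¹ := by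
    funext s
    rw [scaledWeight, mul_zero, zero_mul, add_zero, max_eq_right (by linarith)]
  rw [scaledGamma, hw, iteratedTailIntegral_one_two_mul_iteratedTailIntegral_const]
  field_simp
  ring

end

/-- Remark after Theorem 5.2: `lim_{τ→0⁺} A₂(τ)/τ⁴ = 5c₁²/(6b⁴)`
where `A₂(τ) = Γ_τ(1)/2`. -/
theorem tendsto_A2_div_tau_pow_four (b c₁ : ℝ) (hb : 0 < b) (hc₁ : 0 < c₁) :
    Tendsto (fun τ : ℝ => (GammaFn b c₁ τ 1 / 2) / τ ^ 4)
      (𝓝[>] 0) (𝓝 (5 * c₁ ^ 2 / (6 * b ^ 4))) := by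
  have hlim :
      Tendsto (fun τ => scaledGamma b c₁ τ / 2) (𝓝[>] 0) (𝓝 (scaledGamma b c₁ 0 / 2)) :=
    (((continuous_scaledGamma hb).tendsto 0).mono_left nhdsWithin_le_nhds).div_const 2
  rw [scaledGamma_zero hb, div_div, show (3 : ℝ) * b ^ 4 * 2 = 6 * b ^ 4 by ring] at hlim
  refine hlim.congr' ?_
  filter_upwards [self_mem_nhdsWithin] with τ (hτ : 0 < τ)
  rw [GammaFn_one_eq_pow_four_mul hb hc₁.le hτ.le]
  field_simp
end

section
/- Fix real constants b > 0 and c₁ > 0. For τ > 0 set c := c₁τ and A := 2c₁τ², define M_τ(u) = A(b+cu)^{−2} on [0,1], Δ_τ(u) = ∫_0^u ( −∫_v^1 M_τ(s) ds ) dv, Γ_τ(u) = ∫_0^u ( −2∫_v^1 M_τ(s)Δ_τ(s) ds ) dv, and B₂(τ) := ∫_0^1 ( 3Δ_τ(u)² − Γ_τ(u) ) du. Then lim_{τ → 0⁺} B₂(τ)/τ⁴ = 8c₁²/(15b⁴). -/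
open MeasureTheory Real Filter Topology

/-! The nested integrals are homogeneous in the weight: replacing `M` by `a • w` on `[0, 1]`
multiplies `Δ` by `a` and `Γ`, `B₂` by `a²`. With `a = τ²` this gives `B₂(M_τ)/τ⁴ = B₂(w_τ)`
for `w_τ = 2c₁ (b + c₁τu)⁻²`, which depends continuously on `τ` down to `τ = 0`, where it is
the constant `k = 2c₁/b²`. Parametric integrals of jointly continuous functions are continuous,
so the limit is `B₂` of this constant weight, a polynomial integral equal to
`2k²/15 = 8c₁²/(15b⁴)`. -/

open intervalIntegral Set Function

namespace Perturbation

-- The paper's `Δ`, `Γ`, `B₂` for an arbitrary weight `m`; `DeltaFn b c₁ τ` is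
-- `delta (Mwt b c₁ τ)` and `GammaFn b c₁ τ` is `gamma (Mwt b c₁ τ)` by definition.
noncomputable def delta (m : ℝ → ℝ) (u : ℝ) : ℝ :=
  ∫ v in (0:ℝ)..u, -(∫ s in v..(1:ℝ), m s)

noncomputable def gamma (m : ℝ → ℝ) (u : ℝ) : ℝ :=
  ∫ v in (0:ℝ)..u, (-2 * ∫ s in v..(1:ℝ), m s * delta m s)

noncomputable def coeffB₂ (m : ℝ → ℝ) : ℝ :=
  ∫ u in (0:ℝ)..1, (3 * delta m u ^ 2 - gamma m u)

section Homogeneity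

variable {m w : ℝ → ℝ} {a : ℝ}

lemma delta_eq_mul_of_eqOn (h : EqOn m (fun s => a * w s) (Icc 0 1)) {u : ℝ}
    (hu : u ∈ Icc (0:ℝ) 1) : delta m u = a * delta w u := by
  rw [delta, delta, ← intervalIntegral.integral_const_mul]
  refine integral_congr fun v hv => ?_
  have hv : v ∈ Icc (0:ℝ) 1 := uIcc_subset_Icc (left_mem_Icc.2 zero_le_one) hu hv
  have hm : ∫ s in v..(1:ℝ), m s = a * ∫ s in v..(1:ℝ), w s := by
    rw [← intervalIntegral.integral_const_mul]
    exact integral_congr (h.mono (uIcc_subset_Icc hv (right_mem_Icc.2 zero_le_one)))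
  simp only [hm, mul_neg]

lemma gamma_eq_mul_of_eqOn (h : EqOn m (fun s => a * w s) (Icc 0 1)) {u : ℝ}
    (hu : u ∈ Icc (0:ℝ) 1) : gamma m u = a ^ 2 * gamma w u := by
  rw [gamma, gamma, ← intervalIntegral.integral_const_mul]
  refine integral_congr fun v hv => ?_
  have hv : v ∈ Icc (0:ℝ) 1 := uIcc_subset_Icc (left_mem_Icc.2 zero_le_one) hu hv
  have hm : ∫ s in v..(1:ℝ), m s * delta m s
      = a ^ 2 * ∫ s in v..(1:ℝ), w s * delta w s := by
    rw [← intervalIntegral.integral_const_mul]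
    refine integral_congr fun s hs => ?_
    have hs : s ∈ Icc (0:ℝ) 1 := uIcc_subset_Icc hv (right_mem_Icc.2 zero_le_one) hs
    simp only [h hs, delta_eq_mul_of_eqOn h hs]
    ring
  simp only [hm]
  ring

lemma coeffB₂_eq_mul_of_eqOn (h : EqOn m (fun s => a * w s) (Icc 0 1)) :
    coeffB₂ m = a ^ 2 * coeffB₂ w := by
  rw [coeffB₂, coeffB₂, ← intervalIntegral.integral_const_mul]
  refine integral_congr fun u hu => ?_
  rw [uIcc_of_le zero_le_one] at hu
  simp only [delta_eq_mul_of_eqOn h hu, gamma_eq_mul_of_eqOn h hu]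
  ring

end Homogeneity

section Continuity

variable {X : Type*} [TopologicalSpace X] {w : X → ℝ → ℝ}

lemma continuous_integral_to_one (hw : Continuous (uncurry w)) :
    Continuous fun q : X × ℝ => ∫ s in q.2..(1:ℝ), w q.1 s := by
  have h := continuous_parametric_primitive_of_continuous (μ := volume) (a₀ := 1) hw
  refine h.neg.congr fun q => ?_
  exact (integral_symm _ _).symm

lemma continuous_delta (hw : Continuous (uncurry w)) :
    Continuous fun q : X × ℝ => delta (w q.1) q.2 :=
  continuous_parametric_primitive_of_continuous
    (f := fun p v => -(∫ s in v..(1:ℝ), w p s)) (continuous_integral_to_one hw).neg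

lemma continuous_gamma (hw : Continuous (uncurry w)) :
    Continuous fun q : X × ℝ => gamma (w q.1) q.2 :=
  continuous_parametric_primitive_of_continuous
    (f := fun p v => -2 * ∫ s in v..(1:ℝ), w p s * delta (w p) s)
    (continuous_const.mul (continuous_integral_to_one (w := fun p s => w p s * delta (w p) s)
      (hw.mul (continuous_delta hw))))

lemma continuous_coeffB₂ (hw : Continuous (uncurry w)) :
    Continuous fun p => coeffB₂ (w p) :=
  continuous_parametric_intervalIntegral_of_continuous'
    (f := fun p u => 3 * delta (w p) u ^ 2 - gamma (w p) u)
    (show Continuous fun q : X × ℝ => 3 * delta (w q.1) q.2 ^ 2 - gamma (w q.1) q.2 from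
      (continuous_const.mul ((continuous_delta hw).pow 2)).sub (continuous_gamma hw)) 0 1

end Continuity

lemma integral_quartic (a₀ a₁ a₂ a₃ a₄ x y : ℝ) :
    ∫ t in x..y, (a₀ + a₁ * t + a₂ * t ^ 2 + a₃ * t ^ 3 + a₄ * t ^ 4) =
      (a₀ * y + a₁ * y ^ 2 / 2 + a₂ * y ^ 3 / 3 + a₃ * y ^ 4 / 4 + a₄ * y ^ 5 / 5)
      - (a₀ * x + a₁ * x ^ 2 / 2 + a₂ * x ^ 3 / 3 + a₃ * x ^ 4 / 4 + a₄ * x ^ 5 / 5) := by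
  have hderiv (t : ℝ) : HasDerivAt
      (fun t => a₀ * t + a₁ * t ^ 2 / 2 + a₂ * t ^ 3 / 3 + a₃ * t ^ 4 / 4 + a₄ * t ^ 5 / 5)
      (a₀ + a₁ * t + a₂ * t ^ 2 + a₃ * t ^ 3 + a₄ * t ^ 4) t := by
    have := (((((hasDerivAt_id t).const_mul a₀).add
      (((hasDerivAt_pow 2 t).const_mul a₁).div_const 2)).add
      (((hasDerivAt_pow 3 t).const_mul a₂).div_const 3)).add
      (((hasDerivAt_pow 4 t).const_mul a₃).div_const 4)).add
      (((hasDerivAt_pow 5 t).const_mul a₄).div_const 5)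
    exact this.congr_deriv (by norm_num; ring)
  exact integral_eq_sub_of_hasDerivAt (fun t _ => hderiv t)
    (Continuous.intervalIntegrable (by fun_prop) _ _)

section ConstantWeight

variable (k : ℝ)

lemma delta_const (u : ℝ) : delta (fun _ => k) u = k * (u ^ 2 / 2 - u) := by
  have h : (fun v : ℝ => -(∫ _ in v..(1:ℝ), k))
      = fun v => -k + k * v + 0 * v ^ 2 + 0 * v ^ 3 + 0 * v ^ 4 := by
    funext v
    simp only [intervalIntegral.integral_const, smul_eq_mul]
    ring
  rw [delta, h, integral_quartic]
  ring

lemma gamma_const (u : ℝ) :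
    gamma (fun _ => k) u = k ^ 2 * (2 * u / 3 - u ^ 3 / 3 + u ^ 4 / 12) := by
  have hinner (v : ℝ) :
      ∫ s in v..(1:ℝ), k * delta (fun _ => k) s = k ^ 2 * (v ^ 2 / 2 - v ^ 3 / 6 - 1 / 3) := by
    have h : (fun s => k * delta (fun _ => k) s)
        = fun s => 0 + (-k ^ 2) * s + (k ^ 2 / 2) * s ^ 2 + 0 * s ^ 3 + 0 * s ^ 4 := by
      funext s
      rw [delta_const]
      ring
    rw [h, integral_quartic]
    ring
  have h : (fun v => -2 * ∫ s in v..(1:ℝ), k * delta (fun _ => k) s)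
      = fun v => 2 * k ^ 2 / 3 + 0 * v + (-k ^ 2) * v ^ 2 + (k ^ 2 / 3) * v ^ 3 + 0 * v ^ 4 := by
    funext v
    rw [hinner]
    ring
  rw [gamma, h, integral_quartic]
  ring

lemma coeffB₂_const : coeffB₂ (fun _ => k) = 2 * k ^ 2 / 15 := by
  have h : (fun u : ℝ => 3 * delta (fun _ => k) u ^ 2 - gamma (fun _ => k) u)
      = fun u => 0 + (-2 * k ^ 2 / 3) * u + 3 * k ^ 2 * u ^ 2 + (-8 * k ^ 2 / 3) * u ^ 3
          + (2 * k ^ 2 / 3) * u ^ 4 := by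
    funext u
    rw [delta_const, gamma_const]
    ring
  rw [coeffB₂, h, integral_quartic]
  ring

end ConstantWeight

end Perturbation

open Perturbation

/-- `τ⁻² M_τ` with the denominator clamped below by `b / 2`, which makes it jointly continuous
on all of `ℝ²`; the clamp is inactive once `|c₁| τ ≤ b / 2`. -/
noncomputable def clampedWt (b c₁ τ u : ℝ) : ℝ := 2 * c₁ / max (b + c₁ * τ * u) (b / 2) ^ 2

lemma continuous_clampedWt {b : ℝ} (c₁ : ℝ) (hb : 0 < b) :
    Continuous (uncurry (clampedWt b c₁)) := by
  refine continuous_const.div (by fun_prop) fun p => ?_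
  have : 0 < max (b + c₁ * p.1 * p.2) (b / 2) := lt_max_of_lt_right (half_pos hb)
  positivity

lemma clampedWt_zero {b : ℝ} (c₁ : ℝ) (hb : 0 < b) :
    clampedWt b c₁ 0 = fun _ => 2 * c₁ / b ^ 2 := by
  funext u
  simp only [clampedWt, mul_zero, zero_mul, add_zero, max_eq_left (half_le_self hb.le)]

lemma Mwt_eqOn_clampedWt {b c₁ τ : ℝ} (hτ : 0 ≤ τ) (hsmall : |c₁| * τ ≤ b / 2) :
    EqOn (Mwt b c₁ τ) (fun u => τ ^ 2 * clampedWt b c₁ τ u) (Icc 0 1) := by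
  intro u hu
  have hcu : |c₁ * τ * u| ≤ |c₁| * τ := by
    rw [abs_mul, abs_mul, abs_of_nonneg hτ, abs_of_nonneg hu.1]
    exact mul_le_of_le_one_right (by positivity) hu.2
  have hclamp : b / 2 ≤ b + c₁ * τ * u := by linarith [neg_abs_le (c₁ * τ * u)]
  dsimp only
  rw [Mwt, clampedWt, max_eq_left hclamp]
  ring

theorem tendsto_B2_div_tau_pow_four_general (b c₁ : ℝ) (hb : 0 < b) :
    Tendsto (fun τ : ℝ =>
        (∫ u in (0:ℝ)..1, (3 * (DeltaFn b c₁ τ u) ^ 2 - GammaFn b c₁ τ u)) / τ ^ 4)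
      (𝓝[>] 0) (𝓝 (8 * c₁ ^ 2 / (15 * b ^ 4))) := by
  have hlim : Tendsto (fun τ => coeffB₂ (clampedWt b c₁ τ)) (𝓝[>] 0)
      (𝓝 (8 * c₁ ^ 2 / (15 * b ^ 4))) := by
    have h := ((continuous_coeffB₂ (continuous_clampedWt c₁ hb)).tendsto 0).mono_left
      (nhdsWithin_le_nhds (s := Ioi 0))
    rw [clampedWt_zero c₁ hb, coeffB₂_const] at h
    convert h using 2
    ring
  have hsmall : ∀ᶠ τ in 𝓝[>] (0:ℝ), |c₁| * τ ≤ b / 2 := by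
    have h : Tendsto (fun τ : ℝ => |c₁| * τ) (𝓝 0) (𝓝 0) := by
      simpa using (continuous_const_mul |c₁|).tendsto 0
    exact nhdsWithin_le_nhds (h.eventually (eventually_le_nhds (half_pos hb)))
  refine hlim.congr' ?_
  filter_upwards [hsmall, self_mem_nhdsWithin] with τ hτsmall hτ
  change coeffB₂ _ = coeffB₂ (Mwt b c₁ τ) / τ ^ 4
  rw [coeffB₂_eq_mul_of_eqOn (Mwt_eqOn_clampedWt (le_of_lt hτ) hτsmall), ← pow_mul,
    mul_div_cancel_left₀ _ (pow_ne_zero _ (ne_of_gt hτ))]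

/-- Remark after Theorem 5.2: `lim_{τ→0⁺} B₂(τ)/τ⁴ = 8c₁²/(15b⁴)`
where `B₂(τ) = ∫_0^1 (3Δ_τ² − Γ_τ)`. -/
theorem tendsto_B2_div_tau_pow_four (b c₁ : ℝ) (hb : 0 < b) (hc₁ : 0 < c₁) :
    Tendsto (fun τ : ℝ =>
        (∫ u in (0:ℝ)..1, (3 * (DeltaFn b c₁ τ u) ^ 2 - GammaFn b c₁ τ u)) / τ ^ 4)
      (𝓝[>] 0) (𝓝 (8 * c₁ ^ 2 / (15 * b ^ 4))) :=
  tendsto_B2_div_tau_pow_four_general b c₁ hb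
end

section
/- Let a, b, c > 0 be real constants. Set s = √(c²+4a)/c, p = (−1+s)/2, q = (−1−s)/2, ε = −q·b^q / ( p·b^p·(b+c)^{−s} − q·b^q ), and define φ : [0,1] → ℝ by φ(u) = ε·b^p·(b+cu)^{−p} + (1−ε)·b^q·(b+cu)^{−q} (real powers of positive bases). Then φ(0) = 1, φ'(1) = 0, and φ''(u) = a·(b+cu)^{−2}·φ(u) for all u ∈ [0,1]. -/
/-!
Each of `u ↦ (b + c u)^(-p)` and `u ↦ (b + c u)^(-q)` solves the Euler equation
`φ'' = a (b + c u)⁻² φ`, because `-p` and `-q` are the roots `r` of the indicial equation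
`c² r (r - 1) = a`; hence so does every linear combination of them. The normalisation
`b^p`, `b^q` makes `φ(0) = ε + (1 - ε) = 1`, and `ε` is the unique weight for which the two
terms of `φ'(1)` cancel, using `-p - 1 = -s - q - 1`.
-/

open Real

noncomputable def affinePowComb (b c A r B t : ℝ) (x : ℝ) : ℝ :=
  A * (b + c * x) ^ r + B * (b + c * x) ^ t

section AffinePowComb

variable {b c : ℝ}

theorem hasDerivAt_affine_rpow (r : ℝ) {u : ℝ} (hu : 0 < b + c * u) :
    HasDerivAt (fun x => (b + c * x) ^ r) (c * r * (b + c * u) ^ (r - 1)) u := by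
  have h : HasDerivAt (fun x => b + c * x) c u := by
    simpa using ((hasDerivAt_id u).const_mul c).const_add b
  exact h.rpow_const (Or.inl hu.ne')

theorem hasDerivAt_affinePowComb (A r B t : ℝ) {u : ℝ} (hu : 0 < b + c * u) :
    HasDerivAt (affinePowComb b c A r B t)
      (affinePowComb b c (A * r * c) (r - 1) (B * t * c) (t - 1) u) u := by
  refine (((hasDerivAt_affine_rpow r hu).const_mul A).add
    ((hasDerivAt_affine_rpow t hu).const_mul B)).congr_deriv ?_
  simp only [affinePowComb]
  ring

theorem deriv_affinePowComb (A r B t : ℝ) {u : ℝ} (hu : 0 < b + c * u) :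
    deriv (affinePowComb b c A r B t) u
      = affinePowComb b c (A * r * c) (r - 1) (B * t * c) (t - 1) u :=
  (hasDerivAt_affinePowComb A r B t hu).deriv

theorem deriv_deriv_affinePowComb (A r B t : ℝ) {u : ℝ} (hu : 0 < b + c * u) :
    deriv (deriv (affinePowComb b c A r B t)) u
      = affinePowComb b c (A * r * c * (r - 1) * c) (r - 1 - 1)
          (B * t * c * (t - 1) * c) (t - 1 - 1) u := by
  have hopen : IsOpen {x : ℝ | 0 < b + c * x} := isOpen_lt continuous_const (by fun_prop)
  have hderiv : deriv (affinePowComb b c A r B t)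
      =ᶠ[nhds u] affinePowComb b c (A * r * c) (r - 1) (B * t * c) (t - 1) :=
    Filter.eventuallyEq_of_mem (hopen.mem_nhds hu) fun x hx => deriv_affinePowComb A r B t hx
  rw [hderiv.deriv_eq, deriv_affinePowComb _ _ _ _ hu]

theorem deriv_deriv_affinePowComb_of_indicial {a A r B t u : ℝ}
    (hr : c ^ 2 * (r * (r - 1)) = a) (ht : c ^ 2 * (t * (t - 1)) = a) (hu : 0 < b + c * u) :
    deriv (deriv (affinePowComb b c A r B t)) u
      = a * ((b + c * u) ^ 2)⁻¹ * affinePowComb b c A r B t u := by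
  have hshift : ∀ e : ℝ, (b + c * u) ^ (e - 1 - 1) = (b + c * u) ^ e * ((b + c * u) ^ 2)⁻¹ := by
    intro e
    rw [show e - 1 - 1 = e + -2 by ring, rpow_add hu, rpow_neg hu.le, rpow_two]
  rw [deriv_deriv_affinePowComb A r B t hu]
  simp only [affinePowComb, hshift]
  linear_combination (A * (b + c * u) ^ r * ((b + c * u) ^ 2)⁻¹) * hr
    + (B * (b + c * u) ^ t * ((b + c * u) ^ 2)⁻¹) * ht

end AffinePowComb

theorem one_lt_sqrt_sq_add_div {a c : ℝ} (ha : 0 < a) (hc : 0 < c) :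
    1 < √(c ^ 2 + 4 * a) / c := by
  rw [lt_div_iff₀ hc, one_mul, lt_sqrt hc.le]
  linarith

theorem sq_mul_sq_sqrt_sq_add_div {a c : ℝ} (ha : 0 ≤ a) (hc : c ≠ 0) :
    c ^ 2 * (√(c ^ 2 + 4 * a) / c) ^ 2 = c ^ 2 + 4 * a := by
  rw [div_pow, sq_sqrt (by positivity)]
  field_simp

/-- Proposition C.1: the explicit solution of the boundary value problem
`φ'' = a (b + c u)⁻² φ`, `φ(0) = 1`, `φ'(1) = 0`. -/
theorem explicit_BVP_solution (a b c : ℝ) (ha : 0 < a) (hb : 0 < b) (hc : 0 < c)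
    (s p q ε : ℝ)
    (hs : s = Real.sqrt (c ^ 2 + 4 * a) / c)
    (hp : p = (-1 + s) / 2) (hq : q = (-1 - s) / 2)
    (hε : ε = -(q * b ^ q) / (p * b ^ p * (b + c) ^ (-s) - q * b ^ q))
    (φ : ℝ → ℝ)
    (hφ : ∀ u : ℝ, φ u = ε * b ^ p * (b + c * u) ^ (-p)
        + (1 - ε) * b ^ q * (b + c * u) ^ (-q)) :
    φ 0 = 1 ∧ deriv φ 1 = 0 ∧
      ∀ u ∈ Set.Icc (0:ℝ) 1, deriv (deriv φ) u = a * ((b + c * u) ^ 2)⁻¹ * φ u := by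
  have hbc : 0 < b + c := by linarith
  have hs1 : 1 < s := hs ▸ one_lt_sqrt_sq_add_div ha hc
  have hcs : c ^ 2 * s ^ 2 = c ^ 2 + 4 * a := hs ▸ sq_mul_sq_sqrt_sq_add_div ha.le hc.ne'
  have hD : 0 < p * b ^ p * (b + c) ^ (-s) - q * b ^ q := by
    have hp0 : 0 < p := by linarith
    have hq0 : q < 0 := by linarith
    have : q * b ^ q < 0 := mul_neg_of_neg_of_pos hq0 (rpow_pos_of_pos hb q)
    have : 0 < p * b ^ p * (b + c) ^ (-s) := by positivity
    linarith
  obtain rfl : φ = affinePowComb b c (ε * b ^ p) (-p) ((1 - ε) * b ^ q) (-q) := funext hφ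
  refine ⟨?_, ?_, fun u hu => ?_⟩
  · simp only [affinePowComb, mul_zero, add_zero, rpow_neg hb.le]
    field_simp
    ring
  · have hexp : (b + c) ^ (-p - 1) = (b + c) ^ (-s) * (b + c) ^ (-q - 1) := by
      rw [← rpow_add hbc]
      congr 1
      linarith
    rw [deriv_affinePowComb _ _ _ _ (by linarith)]
    simp only [affinePowComb, mul_one, hexp, hε]
    field_simp
    ring
  · exact deriv_deriv_affinePowComb_of_indicial
      (by rw [hp]; linear_combination hcs / 4) (by rw [hq]; linear_combination hcs / 4)
      (by have := hu.1; positivity)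
end

section
/- Let a, b, c > 0 be real constants. Set s = √(c²+4a)/c, p = (−1+s)/2, q = (−1−s)/2, ε = −q·b^q / ( p·b^p·(b+c)^{−s} − q·b^q ), and define φ : [0,1] → ℝ by φ(u) = ε·b^p·(b+cu)^{−p} + (1−ε)·b^q·(b+cu)^{−q}. Then φ'(0) = −( a/(bc) )·( b^q − b^p·(b+c)^{−s} ) / ( p·b^p·(b+c)^{−s} − q·b^q ). -/
/-!
Each normalised power `u ↦ b^r (b + c u)^(-r)` equals `1` at `0` with slope `-r c / b`, so
`φ'(0) = -(c / b) (ε p + (1 - ε) q)`. Substituting `ε`, the numerator collapses to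
`p q (b^p (b + c)^(-s) - b^q)`, and `p q c² = -a` because `p`, `q` are the roots of the indicial
equation `r (r + 1) c² = a` of `φ'' = a (b + c u)⁻² φ`. The denominator of `ε` is positive since
`q < 0 < p`.
-/

open Real

theorem hasDerivAt_rpow_mul_rpow_affine {b : ℝ} (hb : 0 < b) (c r : ℝ) :
    HasDerivAt (fun u : ℝ => b ^ r * (b + c * u) ^ (-r)) (-(r * c / b)) 0 := by
  have hlin : HasDerivAt (fun u : ℝ => b + c * u) c 0 := by
    simpa using ((hasDerivAt_id (0 : ℝ)).const_mul c).const_add b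
  refine ((hlin.rpow_const (p := -r) (Or.inl (by simpa using hb.ne'))).const_mul
    (b ^ r)).congr_deriv ?_
  have hcancel : b ^ r * b ^ (-r - 1) = b⁻¹ := by
    rw [← rpow_add hb, show r + (-r - 1) = -1 by ring, rpow_neg_one]
  simp only [mul_zero, add_zero]
  linear_combination (-(r * c)) * hcancel

theorem indicial_roots_mul {a c s : ℝ} (hc : c ≠ 0) (h : 0 ≤ c ^ 2 + 4 * a)
    (hs : s = √(c ^ 2 + 4 * a) / c) :
    (-1 + s) / 2 * ((-1 - s) / 2) * c ^ 2 = -a := by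
  have hsc : s ^ 2 * c ^ 2 = c ^ 2 + 4 * a := by
    rw [hs, div_pow, div_mul_cancel₀ _ (pow_ne_zero 2 hc), sq_sqrt h]
  linear_combination (-1 / 4 : ℝ) * hsc

/-- Corollary C.2, first formula: the derivative at 0 of the explicit solution
of `φ'' = a (b + c u)⁻² φ`, `φ(0) = 1`, `φ'(1) = 0`. -/
theorem explicit_BVP_solution_deriv_at_zero
    (a b c : ℝ) (ha : 0 < a) (hb : 0 < b) (hc : 0 < c)
    (s p q ε : ℝ)
    (hs : s = Real.sqrt (c ^ 2 + 4 * a) / c)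
    (hp : p = (-1 + s) / 2) (hq : q = (-1 - s) / 2)
    (hε : ε = -(q * b ^ q) / (p * b ^ p * (b + c) ^ (-s) - q * b ^ q))
    (φ : ℝ → ℝ)
    (hφ : ∀ u : ℝ, φ u = ε * b ^ p * (b + c * u) ^ (-p)
        + (1 - ε) * b ^ q * (b + c * u) ^ (-q)) :
    deriv φ 0 = -(a / (b * c)) * (b ^ q - b ^ p * (b + c) ^ (-s))
        / (p * b ^ p * (b + c) ^ (-s) - q * b ^ q) := by
  have hs1 : 1 < s := hs ▸ one_lt_sqrt_sq_add_div ha hc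
  have hpq : p * q * c ^ 2 = -a := by
    rw [hp, hq]; exact indicial_roots_mul hc.ne' (by positivity) hs
  have hD : 0 < p * b ^ p * (b + c) ^ (-s) - q * b ^ q := by
    have hp0 : 0 < p := by linarith
    have hq0 : q < 0 := by linarith
    have hP : 0 < p * b ^ p * (b + c) ^ (-s) := by positivity
    have hB : q * b ^ q < 0 := mul_neg_of_neg_of_pos hq0 (by positivity)
    linarith
  have hφ' : HasDerivAt φ (-(c / b) * (ε * p + (1 - ε) * q)) 0 := by
    rw [show φ = fun u => ε * (b ^ p * (b + c * u) ^ (-p))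
        + (1 - ε) * (b ^ q * (b + c * u) ^ (-q)) from funext fun u => by rw [hφ]; ring]
    refine (((hasDerivAt_rpow_mul_rpow_affine hb c p).const_mul ε).add
      ((hasDerivAt_rpow_mul_rpow_affine hb c q).const_mul (1 - ε))).congr_deriv ?_
    ring
  rw [hφ'.deriv, hε]
  field_simp
  linear_combination (b ^ q - b ^ p * (b + c) ^ (-s)) * hpq
end
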